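/- arXiv:1211.0388 — 2 statements merged into one kernel-verified Lean document; each statement's English description precedes it below -/
import Mathlib

section
/- Let T = conv{(0,0,0),(0,2,0),(2,0,0)} ⊆ ℝ³ and, for rational h > 0, let T^h = conv(T ∪ {(1/2, 1/2, h)}). Then for every rational h ≥ 4/3: (a) T^h ∩ ℤ³ = T ∩ ℤ³, and (b) the split closure of T^h contains T^{h/4}, i.e., T^{h/4} ⊆ SC(T^h). -/
open Set Pointwise

/-- Dot product of an integer vector with a real vector. -/
def zdot {n : ℕ} (c : Fin n → ℤ) (x : Fin n → ℝ) : ℝ := ∑ i, (c i : ℝ) * x i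

/-- Dot product of two real vectors. -/
def rdot {n : ℕ} (c x : Fin n → ℝ) : ℝ := ∑ i, c i * x i

/-- The integer points of `ℝ^n`. -/
def latticePts (n : ℕ) : Set (Fin n → ℝ) := {x | ∀ i, ∃ z : ℤ, x i = (z : ℝ)}

/-- A polyhedron: finite intersection of halfspaces. -/
def IsPolyhedron {n : ℕ} (Q : Set (Fin n → ℝ)) : Prop :=
  ∃ (m : ℕ) (A : Fin m → Fin n → ℝ) (b : Fin m → ℝ), Q = {x | ∀ i, rdot (A i) x ≤ b i}

/-- A rational polyhedron: the data `A`, `b` can be chosen rational. -/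
def IsRatPolyhedron {n : ℕ} (Q : Set (Fin n → ℝ)) : Prop :=
  ∃ (m : ℕ) (A : Fin m → Fin n → ℚ) (b : Fin m → ℚ),
    Q = {x | ∀ i, ∑ j, (A i j : ℝ) * x j ≤ (b i : ℝ)}

/-- The integer hull of a set: the convex hull of its integer points. -/
def intHull {n : ℕ} (Q : Set (Fin n → ℝ)) : Set (Fin n → ℝ) := convexHull ℝ (Q ∩ latticePts n)

/-- An integral polyhedron: a polyhedron equal to the convex hull of its integer points. -/
def IsIntegralPolyhedron {n : ℕ} (P : Set (Fin n → ℝ)) : Prop :=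
  IsPolyhedron P ∧ P = intHull P

/-- The Chvátal–Gomory closure of a set. -/
def cgClosure {n : ℕ} (Q : Set (Fin n → ℝ)) : Set (Fin n → ℝ) :=
  {x ∈ Q | ∀ (c : Fin n → ℤ) (δ : ℝ), (∀ y ∈ Q, zdot c y ≤ δ) → zdot c x ≤ (⌊δ⌋ : ℝ)}

/-- The `p`-th iterated CG closure. -/
def cgIter {n : ℕ} (p : ℕ) (Q : Set (Fin n → ℝ)) : Set (Fin n → ℝ) := cgClosure^[p] Q

/-- The CG rank: the least `p` with `Q^(p) = Q_I`, as an extended natural number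
(`⊤` if no such `p` exists). -/
noncomputable def cgRank {n : ℕ} (Q : Set (Fin n → ℝ)) : ℕ∞ :=
  sInf {p : ℕ∞ | ∃ m : ℕ, p = (m : ℕ∞) ∧ cgIter m Q = intHull Q}

/-- A relaxation of an integral polyhedron `P`: a rational polyhedron with the
same integer points. -/
def IsRelaxation {n : ℕ} (P Q : Set (Fin n → ℝ)) : Prop :=
  IsRatPolyhedron Q ∧ Q ∩ latticePts n = P ∩ latticePts n

/-- `r*(P) = +∞`: for every `p` some relaxation of `P` has CG rank larger than `p`. -/
def RStarInfinite {n : ℕ} (P : Set (Fin n → ℝ)) : Prop :=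
  ∀ p : ℕ, ∃ Q : Set (Fin n → ℝ), IsRelaxation P Q ∧ (p : ℕ∞) < cgRank Q

/-- The recession cone of a convex set. -/
def recCone {n : ℕ} (P : Set (Fin n → ℝ)) : Set (Fin n → ℝ) :=
  {v | ∀ x ∈ P, ∀ α : ℝ, 0 ≤ α → x + α • v ∈ P}

/-- The linear span `⟨v⟩` of a single vector, as a set. -/
def spanLine {n : ℕ} (v : Fin n → ℝ) : Set (Fin n → ℝ) := {w | ∃ t : ℝ, w = t • v}

/-- A set is relatively lattice-free if its relative interior contains no integer point. -/
def RelLatticeFree {n : ℕ} (C : Set (Fin n → ℝ)) : Prop :=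
  intrinsicInterior ℝ C ∩ latticePts n = ∅

/-- A set is lattice-free if its interior contains no integer point. -/
def LatticeFree {n : ℕ} (C : Set (Fin n → ℝ)) : Prop :=
  interior C ∩ latticePts n = ∅

/-- `SC_{α,β}(Q) = conv((Q ∩ {α·x ≤ β}) ∪ (Q ∩ {α·x ≥ β + 1}))`. -/
def splitPiece {n : ℕ} (α : Fin n → ℤ) (β : ℤ) (Q : Set (Fin n → ℝ)) : Set (Fin n → ℝ) :=
  convexHull ℝ ((Q ∩ {x | zdot α x ≤ (β : ℝ)}) ∪ (Q ∩ {x | (β : ℝ) + 1 ≤ zdot α x}))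

/-- The split closure of `Q`. -/
def splitClosure {n : ℕ} (Q : Set (Fin n → ℝ)) : Set (Fin n → ℝ) :=
  ⋂ (α : Fin n → ℤ) (β : ℤ), splitPiece α β Q

/-- The triangle `T = conv{(0,0,0), (0,2,0), (2,0,0)} ⊆ ℝ³`. -/
def Ttri : Set (Fin 3 → ℝ) :=
  convexHull ℝ {![0, 0, 0], ![0, 2, 0], ![2, 0, 0]}

/-- `T^h = conv(T ∪ {(1/2, 1/2, h)})`. -/
def Th (h : ℚ) : Set (Fin 3 → ℝ) :=
  convexHull ℝ (Ttri ∪ {![1 / 2, 1 / 2, (h : ℝ)]})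

/-!
The facets of the tetrahedron `T^h` are `z ≥ 0`, `z ≤ 2hx`, `z ≤ 2hy` and `h(x + y) + z ≤ 2h`.
An integer point with `z ≥ 1` would have `x, y ≥ 1` and violate the last one, so all integer
points of `T^h` lie in the base `T`.

For a split `(α, β)`, the base vertices of `T^{h/4}` are integer points, hence in `SC_{α,β}(T^h)`.
Its apex `(1/2, 1/2, h/4)` is `3/4 m + 1/4 a`, where `m = (1/2, 1/2, 0)` is the midpoint of two
integer points and `a` is the apex of `T^h`. This settles every split except those where both
`a` and `(1/2, 1/2, h/4)` lie strictly between `α·x = β` and `α·x = β + 1`; as these two points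
are `3h/4 ≥ 1` apart vertically, `α₂ = 0` and `α₀ + α₁ = 2β + 1`. The apex of `T^{h/4}` is then
the midpoint of two points of `T^h` on opposite sides of the split, displaced horizontally along
a coordinate `i` with `αᵢ ≠ 0`.
-/

lemma zdot_three (α : Fin 3 → ℤ) (x y z : ℝ) :
    zdot α ![x, y, z] = α 0 * x + α 1 * y + α 2 * z := by
  simp [zdot, Fin.sum_univ_three]

lemma one_le_of_mem_latticePts {n : ℕ} {x : Fin n → ℝ} (hx : x ∈ latticePts n) {i : Fin n}
    (hpos : 0 < x i) : 1 ≤ x i := by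
  obtain ⟨z, hz⟩ := hx i
  rw [hz] at hpos ⊢
  exact Int.cast_one_le_of_pos (Int.cast_pos.mp hpos)

lemma vec_three_mem_latticePts (a b c : ℤ) : ![(a : ℝ), b, c] ∈ latticePts 3 := by
  intro i; fin_cases i
  exacts [⟨a, rfl⟩, ⟨b, rfl⟩, ⟨c, rfl⟩]

lemma exists_zdot_eq_intCast {n : ℕ} (α : Fin n → ℤ) {x : Fin n → ℝ} (hx : x ∈ latticePts n) :
    ∃ k : ℤ, zdot α x = k := by
  choose z hz using hx
  exact ⟨∑ i, α i * z i, by simp [zdot, hz]⟩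

section SplitPiece

variable {n : ℕ} {α : Fin n → ℤ} {β : ℤ} {Q : Set (Fin n → ℝ)} {x p q : Fin n → ℝ}

lemma convex_splitPiece : Convex ℝ (splitPiece α β Q) :=
  convex_convexHull ℝ _

lemma mem_splitPiece_of_mem (hx : x ∈ Q) (hside : zdot α x ≤ β ∨ β + 1 ≤ zdot α x) :
    x ∈ splitPiece α β Q :=
  subset_convexHull ℝ _ (hside.imp (⟨hx, ·⟩) (⟨hx, ·⟩))

lemma mem_splitPiece_of_mem_latticePts (hx : x ∈ Q) (hxZ : x ∈ latticePts n) :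
    x ∈ splitPiece α β Q := by
  obtain ⟨k, hk⟩ := exists_zdot_eq_intCast α hxZ
  refine mem_splitPiece_of_mem hx ?_
  rw [hk]
  rcases le_or_gt k β with hkβ | hkβ
  · exact Or.inl (mod_cast hkβ)
  · exact Or.inr (mod_cast hkβ)

lemma midpoint_mem_splitPiece (hp : p ∈ Q) (hq : q ∈ Q)
    (hsum : zdot α p + zdot α q = 2 * β + 1) (hgap : 1 ≤ |zdot α p - zdot α q|) :
    midpoint ℝ p q ∈ splitPiece α β Q := by
  rcases le_abs'.mp hgap with hgap | hgap
  · exact convex_splitPiece.midpoint_mem (mem_splitPiece_of_mem hp (Or.inl (by linarith)))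
      (mem_splitPiece_of_mem hq (Or.inr (by linarith)))
  · exact convex_splitPiece.midpoint_mem (mem_splitPiece_of_mem hp (Or.inr (by linarith)))
      (mem_splitPiece_of_mem hq (Or.inl (by linarith)))

end SplitPiece

lemma Th_eq (h : ℚ) : Th h = convexHull ℝ
    {![0, 0, 0], ![0, 2, 0], ![2, 0, 0], ![1 / 2, 1 / 2, (h : ℝ)]} := by
  rw [Th, Ttri, convexHull_convexHull_union_left]
  congr 1
  ext x
  simp [or_comm, or_left_comm]

lemma Ttri_subset_Th (h : ℚ) : Ttri ⊆ Th h :=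
  subset_convexHull ℝ _ |>.trans' subset_union_left

lemma mem_Ttri_of {x : Fin 3 → ℝ} (hx0 : 0 ≤ x 0) (hx1 : 0 ≤ x 1) (hsum : x 0 + x 1 ≤ 2)
    (hx2 : x 2 = 0) : x ∈ Ttri := by
  refine mem_convexHull_of_exists_fintype ![1 - x 0 / 2 - x 1 / 2, x 1 / 2, x 0 / 2]
    ![![0, 0, 0], ![0, 2, 0], ![2, 0, 0]] ?_ ?_ ?_ ?_
  · intro i; fin_cases i <;> simp <;> linarith
  · simp [Fin.sum_univ_three]
  · intro i; fin_cases i <;> simp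
  · ext i; fin_cases i <;> simp [Fin.sum_univ_three, hx2]

/-- Barycentric coordinates `(1 - c₁ - c₂ - c₃, c₁, c₂, c₃)` with respect to the vertices
`0, (0, 2, 0), (2, 0, 0), (1/2, 1/2, h)`. -/
lemma mem_Th_of_coeffs {h : ℚ} {x : Fin 3 → ℝ} (c₁ c₂ c₃ : ℝ)
    (hc : 0 ≤ c₁ ∧ 0 ≤ c₂ ∧ 0 ≤ c₃ ∧ c₁ + c₂ + c₃ ≤ 1)
    (hx : x 0 = 2 * c₂ + c₃ / 2 ∧ x 1 = 2 * c₁ + c₃ / 2 ∧ x 2 = c₃ * h) : x ∈ Th h := by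
  obtain ⟨h₁, h₂, h₃, hle⟩ := hc
  rw [Th_eq]
  refine mem_convexHull_of_exists_fintype ![1 - c₁ - c₂ - c₃, c₁, c₂, c₃]
    ![![0, 0, 0], ![0, 2, 0], ![2, 0, 0], ![1 / 2, 1 / 2, (h : ℝ)]] ?_ ?_ ?_ ?_
  · intro i; fin_cases i <;> simp <;> linarith
  · simp [Fin.sum_univ_four]; ring
  · intro i; fin_cases i <;> simp
  · ext i; fin_cases i <;> simp [Fin.sum_univ_four, hx] <;> ring

lemma le_of_mem_Th {h : ℚ} {a b c d : ℝ} (h₀ : 0 ≤ d) (h₁ : 2 * b ≤ d) (h₂ : 2 * a ≤ d)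
    (h₃ : a / 2 + b / 2 + c * h ≤ d) {x : Fin 3 → ℝ} (hx : x ∈ Th h) :
    a * x 0 + b * x 1 + c * x 2 ≤ d := by
  have hconv : Convex ℝ {y : Fin 3 → ℝ | a * y 0 + b * y 1 + c * y 2 ≤ d} := by
    refine convex_halfSpace_le ⟨fun u v ↦ ?_, fun t u ↦ ?_⟩ d <;>
      simp only [Pi.add_apply, Pi.smul_apply, smul_eq_mul] <;> ring
  rw [Th_eq] at hx
  refine convexHull_min ?_ hconv hx
  rintro v (rfl | rfl | rfl | rfl) <;> simp <;> linarith

theorem Th_inter_latticePts {h : ℚ} (hpos : 0 < h) :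
    Th h ∩ latticePts 3 = Ttri ∩ latticePts 3 := by
  have hr : (0 : ℝ) < h := mod_cast hpos
  refine Subset.antisymm ?_ (inter_subset_inter_left _ (Ttri_subset_Th h))
  rintro x ⟨hx, hxZ⟩
  refine ⟨?_, hxZ⟩
  have hz : 0 ≤ x 2 := by
    have := le_of_mem_Th (a := 0) (b := 0) (c := -1) (d := 0) le_rfl (by simp) (by simp)
      (by linarith) hx
    linarith
  have hzx : x 2 ≤ 2 * h * x 0 := by
    have := le_of_mem_Th (a := -2 * h) (b := 0) (c := 1) le_rfl (by simp) (by linarith)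
      (by linarith) hx
    linarith
  have hzy : x 2 ≤ 2 * h * x 1 := by
    have := le_of_mem_Th (a := 0) (b := -2 * h) (c := 1) le_rfl (by linarith) (by simp)
      (by linarith) hx
    linarith
  have hsum : h * (x 0 + x 1) + x 2 ≤ 2 * h := by
    have := le_of_mem_Th (a := h) (b := h) (c := 1) (d := 2 * h) (by linarith) le_rfl le_rfl
      (by linarith) hx
    linarith
  have hz0 : x 2 = 0 := by
    by_contra hne
    have hz1 := one_le_of_mem_latticePts hxZ (lt_of_le_of_ne hz (Ne.symm hne))
    have hx1 := one_le_of_mem_latticePts hxZ (i := 0) (by nlinarith)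
    have hy1 := one_le_of_mem_latticePts hxZ (i := 1) (by nlinarith)
    nlinarith
  rw [hz0] at hzx hzy hsum
  exact mem_Ttri_of (by nlinarith) (by nlinarith) (by nlinarith) hz0

lemma base_center_mem_splitPiece (h : ℚ) (α : Fin 3 → ℤ) (β : ℤ) :
    ![1 / 2, 1 / 2, 0] ∈ splitPiece α β (Th h) := by
  have e₀ : ![1, 0, 0] ∈ splitPiece α β (Th h) :=
    mem_splitPiece_of_mem_latticePts (mem_Th_of_coeffs 0 (1 / 2) 0 (by norm_num) (by simp))
      (by simpa using vec_three_mem_latticePts 1 0 0)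
  have e₁ : ![0, 1, 0] ∈ splitPiece α β (Th h) :=
    mem_splitPiece_of_mem_latticePts (mem_Th_of_coeffs (1 / 2) 0 0 (by norm_num) (by simp))
      (by simpa using vec_three_mem_latticePts 0 1 0)
  convert convex_splitPiece.midpoint_mem e₀ e₁ using 1
  ext i; fin_cases i <;> simp [midpoint_eq_smul_add]

lemma apex_div_four_mem_splitPiece_of_alpha_two_eq_zero (h : ℚ) {α : Fin 3 → ℤ} {β : ℤ}
    (hα₂ : α 2 = 0) (hsum : α 0 + α 1 = 2 * β + 1) :
    ![1 / 2, 1 / 2, (h : ℝ) / 4] ∈ splitPiece α β (Th h) := by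
  have hsumr : (α 0 + α 1 : ℝ) = 2 * β + 1 := by exact_mod_cast hsum
  by_cases hα₀ : α 0 = 0
  · have hα₁ : (1 : ℝ) ≤ |(α 1 : ℝ)| := mod_cast Int.one_le_abs (by omega)
    convert midpoint_mem_splitPiece (α := α) (β := β)
      (mem_Th_of_coeffs (3 / 8) (1 / 8) (1 / 2) (by norm_num) (by simp; norm_num; ring) :
        ![1 / 2, 1, (h : ℝ) / 2] ∈ Th h)
      (mem_Th_of_coeffs 0 (1 / 4) 0 (by norm_num) (by simp; norm_num) : ![1 / 2, 0, 0] ∈ Th h)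
      (by simp only [zdot_three, hα₂]; push_cast; linarith)
      (by simp only [zdot_three, hα₂, hα₀]; push_cast; ring_nf; exact hα₁) using 1
    ext i; fin_cases i <;> simp [midpoint_eq_smul_add]; ring
  · have hα₀' : (1 : ℝ) ≤ |(α 0 : ℝ)| := mod_cast Int.one_le_abs hα₀
    convert midpoint_mem_splitPiece (α := α) (β := β)
      (mem_Th_of_coeffs (1 / 8) (3 / 8) (1 / 2) (by norm_num) (by simp; norm_num; ring) :
        ![1, 1 / 2, (h : ℝ) / 2] ∈ Th h)
      (mem_Th_of_coeffs (1 / 4) 0 0 (by norm_num) (by simp; norm_num) : ![0, 1 / 2, 0] ∈ Th h)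
      (by simp only [zdot_three, hα₂]; push_cast; linarith)
      (by simp only [zdot_three, hα₂]; push_cast; ring_nf; exact hα₀') using 1
    ext i; fin_cases i <;> simp [midpoint_eq_smul_add]; ring

lemma apex_div_four_mem_splitPiece {h : ℚ} (hh : 4 / 3 ≤ h) (α : Fin 3 → ℤ) (β : ℤ) :
    ![1 / 2, 1 / 2, (h : ℝ) / 4] ∈ splitPiece α β (Th h) := by
  have hr : (4 / 3 : ℝ) ≤ h := by simpa using Rat.cast_le (K := ℝ) |>.mpr hh
  have ha : ![1 / 2, 1 / 2, (h : ℝ)] ∈ Th h := mem_Th_of_coeffs 0 0 1 (by norm_num) (by simp)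
  have hv : ![1 / 2, 1 / 2, (h : ℝ) / 4] ∈ Th h :=
    mem_Th_of_coeffs (3 / 16) (3 / 16) (1 / 4) (by norm_num) (by simp; norm_num; ring)
  by_cases ha_side : zdot α ![1 / 2, 1 / 2, (h : ℝ)] ≤ β ∨ β + 1 ≤ zdot α ![1 / 2, 1 / 2, (h : ℝ)]
  · convert convex_splitPiece (base_center_mem_splitPiece h α β) (mem_splitPiece_of_mem ha ha_side)
      (by norm_num : (0 : ℝ) ≤ 3 / 4) (by norm_num : (0 : ℝ) ≤ 1 / 4) (by norm_num) using 1
    ext i; fin_cases i <;> simp <;> ring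
  by_cases hv_side :
      zdot α ![1 / 2, 1 / 2, (h : ℝ) / 4] ≤ β ∨ β + 1 ≤ zdot α ![1 / 2, 1 / 2, (h : ℝ) / 4]
  · exact mem_splitPiece_of_mem hv hv_side
  simp only [zdot_three, not_or, not_le] at ha_side hv_side
  -- both points lie strictly inside the split, yet differ in height by `3h/4 ≥ 1`
  have hα₂ : α 2 = 0 := by
    by_contra hα₂
    rcases Int.cast_le_neg_one_or_one_le_cast_of_ne_zero ℝ hα₂ with hα₂ | hα₂ <;> nlinarith
  refine apex_div_four_mem_splitPiece_of_alpha_two_eq_zero h hα₂ ?_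
  simp only [hα₂, Int.cast_zero, zero_mul, add_zero] at hv_side
  have h₁ : 2 * β < α 0 + α 1 := by exact_mod_cast (by linarith : (2 * β : ℝ) < α 0 + α 1)
  have h₂ : α 0 + α 1 < 2 * β + 2 := by
    exact_mod_cast (by linarith : (α 0 + α 1 : ℝ) < 2 * β + 2)
  omega

lemma Th_div_four_subset_splitPiece {h : ℚ} (hh : 4 / 3 ≤ h) (α : Fin 3 → ℤ) (β : ℤ) :
    Th (h / 4) ⊆ splitPiece α β (Th h) := by
  have hbase : ∀ v ∈ Ttri, v ∈ latticePts 3 → v ∈ splitPiece α β (Th h) :=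
    fun v hv hvZ ↦ mem_splitPiece_of_mem_latticePts (Ttri_subset_Th h hv) hvZ
  rw [Th_eq]
  refine convexHull_min ?_ convex_splitPiece
  rintro v (rfl | rfl | rfl | rfl)
  · exact hbase _ (subset_convexHull ℝ _ (by simp)) (by simpa using vec_three_mem_latticePts 0 0 0)
  · exact hbase _ (subset_convexHull ℝ _ (by simp)) (by simpa using vec_three_mem_latticePts 0 2 0)
  · exact hbase _ (subset_convexHull ℝ _ (by simp)) (by simpa using vec_three_mem_latticePts 2 0 0)
  · simpa using apex_div_four_mem_splitPiece hh α β

theorem stmt_16 (h : ℚ) (hh : 4 / 3 ≤ h) :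
    Th h ∩ latticePts 3 = Ttri ∩ latticePts 3 ∧ Th (h / 4) ⊆ splitClosure (Th h) :=
  ⟨Th_inter_latticePts (by linarith),
    subset_iInter₂ fun α β ↦ Th_div_four_subset_splitPiece hh α β⟩
end

section
/- Let T = conv{(0,0,0),(0,2,0),(2,0,0)} ⊆ ℝ³. The reverse split rank of T is +∞; that is, for every k ∈ ℕ there exists a rational polytope Q ⊆ ℝ³ with Q ∩ ℤ³ = T ∩ ℤ³ whose split rank exceeds k (equivalently, SC^k(Q) ≠ T). -/
open Set Pointwise

abbrev V3 := Fin 3 → ℝ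

lemma zdot3 (c : Fin 3 → ℤ) (x : V3) :
    zdot c x = (c 0 : ℝ) * x 0 + (c 1) * x 1 + (c 2) * x 2 := by
  simp [zdot, Fin.sum_univ_three]

@[simp] lemma v3_0 (a b c : ℝ) : (![a,b,c] : V3) 0 = a := rfl
@[simp] lemma v3_1 (a b c : ℝ) : (![a,b,c] : V3) 1 = b := rfl
@[simp] lemma v3_2 (a b c : ℝ) : (![a,b,c] : V3) 2 = c := rfl

lemma hull4_mem {p0 p1 p2 p3 : V3} {w0 w1 w2 w3 : ℝ} (h0 : 0 ≤ w0) (h1 : 0 ≤ w1)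
    (h2 : 0 ≤ w2) (h3 : 0 ≤ w3) (hs : w0 + w1 + w2 + w3 = 1) :
    w0 • p0 + w1 • p1 + w2 • p2 + w3 • p3 ∈ convexHull ℝ ({p0, p1, p2, p3} : Set V3) := by
  have hz : ∀ i ∈ (Finset.univ : Finset (Fin 4)),
      (![p0,p1,p2,p3]) i ∈ ({p0,p1,p2,p3} : Set V3) := by
    intro i _; fin_cases i <;> simp
  have hw : ∀ i ∈ (Finset.univ : Finset (Fin 4)), 0 ≤ (![w0,w1,w2,w3]) i := by
    intro i _; fin_cases i <;> simpa
  have hsum : ∑ i, (![w0,w1,w2,w3]) i = 1 := by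
    simp [Fin.sum_univ_four]; linarith
  have hmem := Finset.centerMass_mem_convexHull Finset.univ hw (by rw [hsum]; norm_num) hz
  rw [Finset.centerMass, hsum, inv_one, one_smul, Fin.sum_univ_four] at hmem
  simpa using hmem

noncomputable def apx (h : ℝ) : V3 := ![1/2, 1/2, h]

def ThR (h : ℝ) : Set V3 := convexHull ℝ {![0,0,0], ![0,2,0], ![2,0,0], apx h}

lemma mem_ThR {h : ℝ} {x : V3} {w0 w1 w2 w3 : ℝ} (h0 : 0 ≤ w0) (h1 : 0 ≤ w1)
    (h2 : 0 ≤ w2) (h3 : 0 ≤ w3) (hs : w0 + w1 + w2 + w3 = 1)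
    (e0 : x 0 = 2*w2 + w3/2) (e1 : x 1 = 2*w1 + w3/2) (e2 : x 2 = w3*h) :
    x ∈ ThR h := by
  have hx : x = w0 • ![0,0,0] + w1 • ![0,2,0] + w2 • ![2,0,0] + w3 • apx h := by
    funext i
    fin_cases i <;>
      simp [apx, Pi.add_apply, Pi.smul_apply, smul_eq_mul] <;> linarith
  rw [hx]; exact hull4_mem h0 h1 h2 h3 hs

lemma Ttri_sub_ThR (h : ℝ) : Ttri ⊆ ThR h := by
  apply convexHull_mono
  intro x hx
  rcases hx with h'|h'|h' <;> simp_all [ThR] <;> tauto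

lemma int_side (r β : ℤ) : ((r:ℝ) ≤ (β:ℝ)) ∨ ((β:ℝ) + 1 ≤ (r:ℝ)) := by
  rcases le_or_gt r β with h|h
  · left; exact_mod_cast h
  · right; exact_mod_cast h

lemma mem_piece_self {S : Set V3} {α : Fin 3 → ℤ} {β : ℤ} {x : V3} (hx : x ∈ S)
    (hside : zdot α x ≤ (β:ℝ) ∨ (β:ℝ) + 1 ≤ zdot α x) : x ∈ splitPiece α β S := by
  apply subset_convexHull
  rcases hside with h|h
  · exact Or.inl ⟨hx, h⟩
  · exact Or.inr ⟨hx, h⟩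

lemma mem_piece_comb2 {S : Set V3} {α : Fin 3 → ℤ} {β : ℤ} {x y p : V3}
    (hx : x ∈ S) (hsx : zdot α x ≤ (β:ℝ) ∨ (β:ℝ) + 1 ≤ zdot α x)
    (hy : y ∈ S) (hsy : zdot α y ≤ (β:ℝ) ∨ (β:ℝ) + 1 ≤ zdot α y)
    {a b : ℝ} (ha : 0 ≤ a) (hb : 0 ≤ b) (hab : a + b = 1)
    (hp : p = a • x + b • y) : p ∈ splitPiece α β S := by
  have hx' := mem_piece_self hx hsx
  have hy' := mem_piece_self hy hsy
  rw [hp]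
  exact (convex_convexHull ℝ _) hx' hy' ha hb hab

lemma mem_piece_comb3 {S : Set V3} {α : Fin 3 → ℤ} {β : ℤ} {x y z p : V3}
    (hx : x ∈ S) (hsx : zdot α x ≤ (β:ℝ) ∨ (β:ℝ) + 1 ≤ zdot α x)
    (hy : y ∈ S) (hsy : zdot α y ≤ (β:ℝ) ∨ (β:ℝ) + 1 ≤ zdot α y)
    (hz : z ∈ S) (hsz : zdot α z ≤ (β:ℝ) ∨ (β:ℝ) + 1 ≤ zdot α z)
    (hp : p = (1/3 : ℝ) • x + (1/3 : ℝ) • y + (1/3 : ℝ) • z) : p ∈ splitPiece α β S := by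
  have hq : ((1/2 : ℝ) • x + (1/2 : ℝ) • y) ∈ splitPiece α β S :=
    mem_piece_comb2 hx hsx hy hsy (by norm_num) (by norm_num) (by norm_num) rfl
  have hz' := mem_piece_self hz hsz
  have hp' : p = (2/3 : ℝ) • ((1/2 : ℝ) • x + (1/2 : ℝ) • y) + (1/3 : ℝ) • z := by
    rw [hp]; module
  rw [hp']
  exact (convex_convexHull ℝ _) hq hz' (by norm_num) (by norm_num) (by norm_num)

lemma side_of_int {α : Fin 3 → ℤ} {β : ℤ} {x : V3} (r : ℤ) (hr : zdot α x = (r:ℝ)) :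
    zdot α x ≤ (β:ℝ) ∨ (β:ℝ) + 1 ≤ zdot α x := by
  rw [hr]; exact int_side r β

lemma gen0 (h : ℝ) : (![0,0,0]:V3) ∈ ThR h := subset_convexHull ℝ _ (Set.mem_insert _ _)
lemma gen1 (h : ℝ) : (![0,2,0]:V3) ∈ ThR h :=
  subset_convexHull ℝ _ (Set.mem_insert_of_mem _ (Set.mem_insert _ _))
lemma gen2 (h : ℝ) : (![2,0,0]:V3) ∈ ThR h :=
  subset_convexHull ℝ _ (Set.mem_insert_of_mem _ (Set.mem_insert_of_mem _ (Set.mem_insert _ _)))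
lemma gen3 (h : ℝ) : apx h ∈ ThR h :=
  subset_convexHull ℝ _ (Set.mem_insert_of_mem _ (Set.mem_insert_of_mem _
    (Set.mem_insert_of_mem _ rfl)))

lemma apx_mem_ThR {h h' : ℝ} (h0 : 0 ≤ h') (hle : h' ≤ h) : apx h' ∈ ThR h := by
  rcases eq_or_lt_of_le hle with rfl | hlt
  · exact gen3 _
  · have hhpos : 0 < h := lt_of_le_of_lt h0 hlt
    refine mem_ThR (w0 := (1 - h'/h)/2) (w1 := (1 - h'/h)/4) (w2 := (1 - h'/h)/4)
      (w3 := h'/h) ?_ ?_ ?_ ?_ ?_ ?_ ?_ ?_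
    · have : h'/h ≤ 1 := by rw [div_le_one hhpos]; linarith
      linarith
    · have : h'/h ≤ 1 := by rw [div_le_one hhpos]; linarith
      linarith
    · have : h'/h ≤ 1 := by rw [div_le_one hhpos]; linarith
      linarith
    · positivity
    · ring
    · simp only [apx, v3_0]; ring
    · simp only [apx, v3_1]; ring
    · simp only [apx, v3_2]
      rw [div_mul_cancel₀ _ (ne_of_gt hhpos)]

set_option maxHeartbeats 2000000 in
lemma key {h : ℝ} (hh : (3:ℝ)/2 ≤ h) {S : Set V3} (hS : ThR h ⊆ S) :
    ThR (h/3) ⊆ splitClosure S := by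
  have hsub : ∀ (α : Fin 3 → ℤ) (β : ℤ), ThR (h/3) ⊆ splitPiece α β S := by
    intro α β
    apply convexHull_min _ (convex_convexHull ℝ _)
    intro y hy
    have hz0 : zdot α ![0,0,0] = ((0:ℤ):ℝ) := by rw [zdot3]; simp only [v3_0, v3_1, v3_2]; push_cast; ring
    have hz1 : zdot α ![0,2,0] = ((2 * α 1 :ℤ):ℝ) := by rw [zdot3]; simp only [v3_0, v3_1, v3_2]; push_cast; ring
    have hz2 : zdot α ![2,0,0] = ((2 * α 0 :ℤ):ℝ) := by rw [zdot3]; simp only [v3_0, v3_1, v3_2]; push_cast; ring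
    rcases hy with rfl | rfl | rfl | rfl
    · exact mem_piece_self (hS (gen0 h)) (side_of_int _ hz0)
    · exact mem_piece_self (hS (gen1 h)) (side_of_int _ hz1)
    · exact mem_piece_self (hS (gen2 h)) (side_of_int _ hz2)
    -- the apex of ThR (h/3)
    have hapmem : apx (h/3) ∈ S := hS (apx_mem_ThR (by linarith) (by linarith))
    rcases le_or_gt (zdot α (apx (h/3))) (β:ℝ) with hg1 | hg1
    · exact mem_piece_self hapmem (Or.inl hg1)
    rcases le_or_gt ((β:ℝ)+1) (zdot α (apx (h/3))) with hg2 | hg2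
    · exact mem_piece_self hapmem (Or.inr hg2)
    by_cases hv : zdot α (apx h) ≤ (β:ℝ) ∨ (β:ℝ) + 1 ≤ zdot α (apx h)
    · -- use (1,0,0), (0,1,0) and the apex of ThR h
      have hm1 : (![1,0,0] : V3) ∈ ThR h := by
        refine mem_ThR (w0 := 1/2) (w1 := 0) (w2 := 1/2) (w3 := 0) (by norm_num) le_rfl
          (by norm_num) le_rfl (by norm_num) ?_ ?_ ?_ <;> simp
      have hm2 : (![0,1,0] : V3) ∈ ThR h := by
        refine mem_ThR (w0 := 1/2) (w1 := 1/2) (w2 := 0) (w3 := 0) (by norm_num)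
          (by norm_num) le_rfl le_rfl (by norm_num) ?_ ?_ ?_ <;> simp
      have hq1 : zdot α ![1,0,0] = ((α 0 :ℤ):ℝ) := by rw [zdot3]; simp only [v3_0, v3_1, v3_2]; push_cast; ring
      have hq2 : zdot α ![0,1,0] = ((α 1 :ℤ):ℝ) := by rw [zdot3]; simp only [v3_0, v3_1, v3_2]; push_cast; ring
      refine mem_piece_comb3 (hS hm1) (side_of_int _ hq1) (hS hm2) (side_of_int _ hq2)
        (hS (gen3 h)) hv ?_
      funext i; fin_cases i <;>
        simp [apx, Pi.add_apply, Pi.smul_apply, smul_eq_mul] <;> ring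
    · push_neg at hv
      obtain ⟨hv1, hv2⟩ := hv
      have hG : zdot α (apx (h/3)) = (α 0:ℝ)/2 + (α 1:ℝ)/2 + (α 2:ℝ)*(h/3) := by
        rw [zdot3]; simp only [apx, v3_0, v3_1, v3_2]; ring
      have hV : zdot α (apx h) = (α 0:ℝ)/2 + (α 1:ℝ)/2 + (α 2:ℝ)*h := by
        rw [zdot3]; simp only [apx, v3_0, v3_1, v3_2]; ring
      rw [hG] at hg1 hg2
      rw [hV] at hv1 hv2
      have hdiff : ((α 0:ℝ)/2 + (α 1:ℝ)/2 + (α 2:ℝ)*h) -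
          ((α 0:ℝ)/2 + (α 1:ℝ)/2 + (α 2:ℝ)*(h/3)) = (α 2:ℝ) * (2*h/3) := by ring
      have hc : α 2 = 0 := by
        by_contra hc0
        rcases lt_trichotomy (α 2) 0 with h' | h' | h'
        · have hC : (α 2:ℝ) ≤ -1 := by exact_mod_cast (by omega : α 2 ≤ -1)
          have : (α 2:ℝ) * (2*h/3) ≤ (-1) * (2*h/3) :=
            mul_le_mul_of_nonneg_right hC (by linarith)
          linarith
        · exact hc0 h'
        · have hC : (1:ℝ) ≤ (α 2:ℝ) := by exact_mod_cast (by omega : 1 ≤ α 2)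
          have : (1:ℝ) * (2*h/3) ≤ (α 2:ℝ) * (2*h/3) :=
            mul_le_mul_of_nonneg_right hC (by linarith)
          linarith
      have hC0 : (α 2:ℝ) = 0 := by rw [hc]; norm_num
      rw [hC0] at hg1 hg2
      have hab : α 0 + α 1 = 2*β + 1 := by
        have l1 : (2*(β:ℝ) < (α 0:ℝ) + α 1) := by linarith
        have l2 : ((α 0:ℝ) + α 1 < 2*(β:ℝ)+2) := by linarith
        have l1' : 2*β < α 0 + α 1 := by exact_mod_cast l1
        have l2' : α 0 + α 1 < 2*β+2 := by exact_mod_cast l2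
        omega
      have habR : (α 0:ℝ) + (α 1:ℝ) = 2*(β:ℝ) + 1 := by exact_mod_cast hab
      by_cases hd : 2 ≤ α 0 - α 1 ∨ α 0 - α 1 ≤ -2
      · -- direction (1,-1,0)
        obtain ⟨t, ht1, ht2, ht3⟩ : ∃ t : ℝ, t * ((α 0:ℝ) - α 1) = 1/2 ∧
            -(1/4) ≤ t ∧ t ≤ 1/4 := by
          rcases hd with hd | hd
          · have he2 : (2:ℝ) ≤ (α 0:ℝ) - α 1 := by exact_mod_cast hd
            have hne : ((α 0:ℝ) - α 1) ≠ 0 := by intro hzz; rw [hzz] at he2; norm_num at he2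
            refine ⟨1/(2*((α 0:ℝ) - α 1)), ?_, ?_, ?_⟩
            · field_simp
              try ring
            · have : (0:ℝ) < 1/(2*((α 0:ℝ) - α 1)) := by positivity
              linarith
            · rw [div_le_div_iff₀ (by linarith) (by norm_num)]; linarith
          · have he2 : (α 0:ℝ) - α 1 ≤ -2 := by exact_mod_cast hd
            have hne : ((α 0:ℝ) - α 1) ≠ 0 := by intro hzz; rw [hzz] at he2; norm_num at he2
            refine ⟨1/(2*((α 0:ℝ) - α 1)), ?_, ?_, ?_⟩
            · field_simp
              try ring
            · rw [le_div_iff_of_neg (by linarith)]; linarith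
            · have : 1/(2*((α 0:ℝ) - α 1)) < 0 :=
                div_neg_of_pos_of_neg one_pos (by linarith)
              linarith
        have hy1 : (![1/2 + t, 1/2 - t, h/3] : V3) ∈ ThR h := by
          refine mem_ThR (w0 := 1/3) (w1 := 1/6 - t/2) (w2 := 1/6 + t/2) (w3 := 1/3)
            (by norm_num) (by linarith) (by linarith) (by norm_num) (by ring) ?_ ?_ ?_
          · simp only [v3_0]; ring
          · simp only [v3_1]; ring
          · simp only [v3_2]; ring
        have hy2 : (![1/2 - t, 1/2 + t, h/3] : V3) ∈ ThR h := by
          refine mem_ThR (w0 := 1/3) (w1 := 1/6 + t/2) (w2 := 1/6 - t/2) (w3 := 1/3)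
            (by norm_num) (by linarith) (by linarith) (by norm_num) (by ring) ?_ ?_ ?_
          · simp only [v3_0]; ring
          · simp only [v3_1]; ring
          · simp only [v3_2]; ring
        have hzy1 : zdot α ![1/2 + t, 1/2 - t, h/3] = (β:ℝ) + 1 := by
          rw [zdot3]; simp only [v3_0, v3_1, v3_2]
          linear_combination habR/2 + ht1 + (h/3)*hC0
        have hzy2 : zdot α ![1/2 - t, 1/2 + t, h/3] = (β:ℝ) := by
          rw [zdot3]; simp only [v3_0, v3_1, v3_2]
          linear_combination habR/2 - ht1 + (h/3)*hC0
        refine mem_piece_comb2 (hS hy1) (Or.inr hzy1.ge) (hS hy2) (Or.inl hzy2.le)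
          (by norm_num) (by norm_num) (by norm_num : (1:ℝ)/2 + 1/2 = 1) ?_
        funext i; fin_cases i <;>
          simp [apx, Pi.add_apply, Pi.smul_apply, smul_eq_mul] <;> ring
      · by_cases he : 2 ≤ α 0 + α 1 ∨ α 0 + α 1 ≤ -2
        · -- direction (1,1,0)
          obtain ⟨t, ht1, ht2, ht3⟩ : ∃ t : ℝ, t * ((α 0:ℝ) + α 1) = 1/2 ∧
              -(1/4) ≤ t ∧ t ≤ 1/4 := by
            rcases he with hd | hd
            · have he2 : (2:ℝ) ≤ (α 0:ℝ) + α 1 := by exact_mod_cast hd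
              have hne : ((α 0:ℝ) + α 1) ≠ 0 := by intro hzz; rw [hzz] at he2; norm_num at he2
              refine ⟨1/(2*((α 0:ℝ) + α 1)), ?_, ?_, ?_⟩
              · field_simp
                try ring
              · have : (0:ℝ) < 1/(2*((α 0:ℝ) + α 1)) := by positivity
                linarith
              · rw [div_le_div_iff₀ (by linarith) (by norm_num)]; linarith
            · have he2 : (α 0:ℝ) + α 1 ≤ -2 := by exact_mod_cast hd
              have hne : ((α 0:ℝ) + α 1) ≠ 0 := by intro hzz; rw [hzz] at he2; norm_num at he2
              refine ⟨1/(2*((α 0:ℝ) + α 1)), ?_, ?_, ?_⟩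
              · field_simp
                try ring
              · rw [le_div_iff_of_neg (by linarith)]; linarith
              · have : 1/(2*((α 0:ℝ) + α 1)) < 0 :=
                  div_neg_of_pos_of_neg one_pos (by linarith)
                linarith
          have hy1 : (![1/2 + t, 1/2 + t, h/3] : V3) ∈ ThR h := by
            refine mem_ThR (w0 := 1/3 - t) (w1 := 1/6 + t/2) (w2 := 1/6 + t/2) (w3 := 1/3)
              (by linarith) (by linarith) (by linarith) (by norm_num) (by ring) ?_ ?_ ?_
            · simp only [v3_0]; ring
            · simp only [v3_1]; ring
            · simp only [v3_2]; ring
          have hy2 : (![1/2 - t, 1/2 - t, h/3] : V3) ∈ ThR h := by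
            refine mem_ThR (w0 := 1/3 + t) (w1 := 1/6 - t/2) (w2 := 1/6 - t/2) (w3 := 1/3)
              (by linarith) (by linarith) (by linarith) (by norm_num) (by ring) ?_ ?_ ?_
            · simp only [v3_0]; ring
            · simp only [v3_1]; ring
            · simp only [v3_2]; ring
          have hzy1 : zdot α ![1/2 + t, 1/2 + t, h/3] = (β:ℝ) + 1 := by
            rw [zdot3]; simp only [v3_0, v3_1, v3_2]
            linear_combination habR/2 + ht1 + (h/3)*hC0
          have hzy2 : zdot α ![1/2 - t, 1/2 - t, h/3] = (β:ℝ) := by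
            rw [zdot3]; simp only [v3_0, v3_1, v3_2]
            linear_combination habR/2 - ht1 + (h/3)*hC0
          refine mem_piece_comb2 (hS hy1) (Or.inr hzy1.ge) (hS hy2) (Or.inl hzy2.le)
            (by norm_num) (by norm_num) (by norm_num : (1:ℝ)/2 + 1/2 = 1) ?_
          funext i; fin_cases i <;>
            simp [apx, Pi.add_apply, Pi.smul_apply, smul_eq_mul] <;> ring
        · -- the four small cases
          push_neg at hd he
          have hx1a : (![1, 1/3, 2*h/3] : V3) ∈ ThR h := by
            refine mem_ThR (w0 := 0) (w1 := 0) (w2 := 1/3) (w3 := 2/3)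
              le_rfl le_rfl (by norm_num) (by norm_num) (by norm_num) ?_ ?_ ?_
            · simp only [v3_0]; ring
            · simp only [v3_1]; ring
            · simp only [v3_2]; ring
          have hx2a : (![0, 2/3, 0] : V3) ∈ ThR h := by
            refine mem_ThR (w0 := 2/3) (w1 := 1/3) (w2 := 0) (w3 := 0)
              (by norm_num) (by norm_num) le_rfl le_rfl (by norm_num) ?_ ?_ ?_
            · simp only [v3_0]; ring
            · simp only [v3_1]; ring
            · simp only [v3_2]; ring
          have hx1b : (![1/3, 1, 2*h/3] : V3) ∈ ThR h := by
            refine mem_ThR (w0 := 0) (w1 := 1/3) (w2 := 0) (w3 := 2/3)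
              le_rfl (by norm_num) le_rfl (by norm_num) (by norm_num) ?_ ?_ ?_
            · simp only [v3_0]; ring
            · simp only [v3_1]; ring
            · simp only [v3_2]; ring
          have hx2b : (![2/3, 0, 0] : V3) ∈ ThR h := by
            refine mem_ThR (w0 := 2/3) (w1 := 0) (w2 := 1/3) (w3 := 0)
              (by norm_num) le_rfl (by norm_num) le_rfl (by norm_num) ?_ ?_ ?_
            · simp only [v3_0]; ring
            · simp only [v3_1]; ring
            · simp only [v3_2]; ring
          have hcomba : apx (h/3) = (1/2:ℝ) • (![1, 1/3, 2*h/3] : V3) +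
              (1/2:ℝ) • (![0, 2/3, 0] : V3) := by
            funext i; fin_cases i <;>
              simp [apx, Pi.add_apply, Pi.smul_apply, smul_eq_mul] <;> ring
          have hcombb : apx (h/3) = (1/2:ℝ) • (![1/3, 1, 2*h/3] : V3) +
              (1/2:ℝ) • (![2/3, 0, 0] : V3) := by
            funext i; fin_cases i <;>
              simp [apx, Pi.add_apply, Pi.smul_apply, smul_eq_mul] <;> ring
          have hza : zdot α ![1, 1/3, 2*h/3] = (α 0:ℝ) + (α 1:ℝ)/3 := by
            rw [zdot3]; simp only [v3_0, v3_1, v3_2]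
            linear_combination (2*h/3)*hC0
          have hzb : zdot α ![0, 2/3, 0] = 2*(α 1:ℝ)/3 := by
            rw [zdot3]; simp only [v3_0, v3_1, v3_2]; ring
          have hzc : zdot α ![1/3, 1, 2*h/3] = (α 0:ℝ)/3 + (α 1:ℝ) := by
            rw [zdot3]; simp only [v3_0, v3_1, v3_2]
            linear_combination (2*h/3)*hC0
          have hzd : zdot α ![2/3, 0, 0] = 2*(α 0:ℝ)/3 := by
            rw [zdot3]; simp only [v3_0, v3_1, v3_2]; ring
          have hfour : (α 0 = 1 ∧ α 1 = 0 ∧ β = 0) ∨ (α 0 = -1 ∧ α 1 = 0 ∧ β = -1) ∨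
              (α 0 = 0 ∧ α 1 = 1 ∧ β = 0) ∨ (α 0 = 0 ∧ α 1 = -1 ∧ β = -1) := by omega
          rcases hfour with ⟨ha', hb', hbeta⟩ | ⟨ha', hb', hbeta⟩ |
            ⟨ha', hb', hbeta⟩ | ⟨ha', hb', hbeta⟩
          · refine mem_piece_comb2 (hS hx1a) (Or.inr ?_) (hS hx2a) (Or.inl ?_)
              (by norm_num) (by norm_num) (by norm_num : (1:ℝ)/2 + 1/2 = 1) hcomba
            · rw [hza, ha', hb', hbeta]; norm_num
            · rw [hzb, hb', hbeta]; norm_num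
          · refine mem_piece_comb2 (hS hx1a) (Or.inl ?_) (hS hx2a) (Or.inr ?_)
              (by norm_num) (by norm_num) (by norm_num : (1:ℝ)/2 + 1/2 = 1) hcomba
            · rw [hza, ha', hb', hbeta]; norm_num
            · rw [hzb, hb', hbeta]; norm_num
          · refine mem_piece_comb2 (hS hx1b) (Or.inr ?_) (hS hx2b) (Or.inl ?_)
              (by norm_num) (by norm_num) (by norm_num : (1:ℝ)/2 + 1/2 = 1) hcombb
            · rw [hzc, ha', hb', hbeta]; norm_num
            · rw [hzd, ha', hbeta]; norm_num
          · refine mem_piece_comb2 (hS hx1b) (Or.inl ?_) (hS hx2b) (Or.inr ?_)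
              (by norm_num) (by norm_num) (by norm_num : (1:ℝ)/2 + 1/2 = 1) hcombb
            · rw [hzc, ha', hb', hbeta]; norm_num
            · rw [hzd, ha', hbeta]; norm_num
  intro x hx
  simp only [splitClosure, Set.mem_iInter]
  intro α β
  exact hsub α β hx

def Amat (k : ℕ) : Fin 4 → Fin 3 → ℚ :=
  ![![0,0,-1], ![-(2*3^(k+1)), 0, 1], ![0, -(2*3^(k+1)), 1], ![3^(k+1), 3^(k+1), 1]]

def bvec (k : ℕ) : Fin 4 → ℚ := ![0, 0, 0, 2*3^(k+1)]

def Qk (k : ℕ) : Set V3 := {x | ∀ i, ∑ j, (Amat k i j : ℝ) * x j ≤ (bvec k i : ℝ)}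

lemma memQk {k : ℕ} {x : V3} : x ∈ Qk k ↔
    (0 ≤ x 2 ∧ x 2 ≤ 2*(3:ℝ)^(k+1)*x 0 ∧ x 2 ≤ 2*(3:ℝ)^(k+1)*x 1 ∧
      (3:ℝ)^(k+1)*x 0 + (3:ℝ)^(k+1)*x 1 + x 2 ≤ 2*(3:ℝ)^(k+1)) := by
  constructor
  · intro hx
    have h0 := hx 0
    have h1 := hx 1
    have h2 := hx 2
    have h3 := hx 3
    simp [Qk, Amat, bvec, Fin.sum_univ_three] at h0 h1 h2 h3
    push_cast at h0 h1 h2 h3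
    refine ⟨by linarith, by linarith, by linarith, by linarith⟩
  · rintro ⟨c1, c2, c3, c4⟩ i
    fin_cases i <;> simp [Qk, Amat, bvec, Fin.sum_univ_three] <;>
      push_cast <;> linarith

lemma convexQk (k : ℕ) : Convex ℝ (Qk k) := by
  intro x hx y hy a b ha hb hab
  intro i
  have h1 := hx i
  have h2 := hy i
  have e : ∑ j, (Amat k i j : ℝ) * (a • x + b • y) j =
      a * (∑ j, (Amat k i j : ℝ) * x j) + b * (∑ j, (Amat k i j : ℝ) * y j) := by
    simp only [Pi.add_apply, Pi.smul_apply, smul_eq_mul, Finset.mul_sum]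
    rw [← Finset.sum_add_distrib]
    apply Finset.sum_congr rfl
    intro j _; ring
  show ∑ j, (Amat k i j : ℝ) * (a • x + b • y) j ≤ (bvec k i : ℝ)
  rw [e]
  have g1 : a * (∑ j, (Amat k i j : ℝ) * x j) ≤ a * (bvec k i : ℝ) :=
    mul_le_mul_of_nonneg_left h1 ha
  have g2 : b * (∑ j, (Amat k i j : ℝ) * y j) ≤ b * (bvec k i : ℝ) :=
    mul_le_mul_of_nonneg_left h2 hb
  have g3 : a * (bvec k i : ℝ) + b * (bvec k i : ℝ) = (bvec k i : ℝ) := by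
    rw [← add_mul, hab, one_mul]
  linarith

lemma ThR_sub_Qk (k : ℕ) : ThR ((3:ℝ)^(k+1)) ⊆ Qk k := by
  have hP : (0:ℝ) < (3:ℝ)^(k+1) := by positivity
  apply convexHull_min _ (convexQk k)
  rintro y (rfl | rfl | rfl | rfl) <;> rw [memQk] <;>
    refine ⟨?_, ?_, ?_, ?_⟩ <;> simp [apx] <;> nlinarith [hP]

lemma mem_Ttri {x : V3} (h0 : 0 ≤ x 0) (h1 : 0 ≤ x 1) (hs : x 0 + x 1 ≤ 2)
    (h2 : x 2 = 0) : x ∈ Ttri := by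
  have hset : ({![0,0,0], ![0,2,0], ![2,0,0], ![2,0,0]} : Set V3) =
      {![0,0,0], ![0,2,0], ![2,0,0]} := by
    rw [Set.pair_eq_singleton]
  have hx : x = (1 - x 0/2 - x 1/2) • (![0,0,0]:V3) + (x 1/2) • ![0,2,0] +
      (x 0/2) • ![2,0,0] + (0:ℝ) • ![2,0,0] := by
    funext i; fin_cases i <;>
      simp [Pi.add_apply, Pi.smul_apply, smul_eq_mul] <;> linarith
  have h4 := hull4_mem (p0 := ![0,0,0]) (p1 := ![0,2,0]) (p2 := ![2,0,0])
    (p3 := ![2,0,0]) (w0 := 1 - x 0/2 - x 1/2) (w1 := x 1/2) (w2 := x 0/2) (w3 := 0)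
    (by linarith) (by linarith) (by linarith) le_rfl (by ring)
  rw [Ttri, ← hset, hx]
  exact h4

lemma Qk_lattice (k : ℕ) : Qk k ∩ latticePts 3 = Ttri ∩ latticePts 3 := by
  have hP : (0:ℝ) < (3:ℝ)^(k+1) := by positivity
  have hP1 : (1:ℝ) ≤ (3:ℝ)^(k+1) := by
    calc (1:ℝ) = 1^(k+1) := by rw [one_pow]
    _ ≤ 3^(k+1) := pow_le_pow_left₀ (by norm_num) (by norm_num) _
  ext x
  constructor
  · rintro ⟨hxQ, hlat⟩
    refine ⟨?_, hlat⟩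
    obtain ⟨z0, e0⟩ := hlat 0
    obtain ⟨z1, e1⟩ := hlat 1
    obtain ⟨z2, e2⟩ := hlat 2
    rw [memQk] at hxQ
    obtain ⟨c1, c2, c3, c4⟩ := hxQ
    have hx2 : x 2 = 0 := by
      have hz2nn : (0:ℤ) ≤ z2 := by
        have : (0:ℝ) ≤ (z2:ℝ) := by rw [← e2]; exact c1
        exact_mod_cast this
      have hz2le : z2 ≤ 0 := by
        by_contra hpos
        push_neg at hpos
        have h1R : (1:ℝ) ≤ x 2 := by
          rw [e2]; exact_mod_cast hpos
        have hx0pos : 0 < x 0 := by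
          by_contra hn
          push_neg at hn
          nlinarith [mul_nonpos_of_nonneg_of_nonpos (by positivity : (0:ℝ) ≤ 2*(3:ℝ)^(k+1)) hn]
        have hz0ge : (1:ℤ) ≤ z0 := by
          have : (0:ℝ) < (z0:ℝ) := by rw [← e0]; exact hx0pos
          exact_mod_cast this
        have hx0ge : (1:ℝ) ≤ x 0 := by rw [e0]; exact_mod_cast hz0ge
        have hx1pos : 0 < x 1 := by
          by_contra hn
          push_neg at hn
          nlinarith [mul_nonpos_of_nonneg_of_nonpos (by positivity : (0:ℝ) ≤ 2*(3:ℝ)^(k+1)) hn]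
        have hz1ge : (1:ℤ) ≤ z1 := by
          have : (0:ℝ) < (z1:ℝ) := by rw [← e1]; exact hx1pos
          exact_mod_cast this
        have hx1ge : (1:ℝ) ≤ x 1 := by rw [e1]; exact_mod_cast hz1ge
        nlinarith [mul_le_mul_of_nonneg_left hx0ge hP.le, mul_le_mul_of_nonneg_left hx1ge hP.le]
      have : z2 = 0 := le_antisymm hz2le hz2nn
      rw [e2, this]; norm_num
    have hx0 : 0 ≤ x 0 := by
      by_contra hn
      push_neg at hn
      nlinarith [mul_nonpos_of_nonneg_of_nonpos (by positivity : (0:ℝ) ≤ 2*(3:ℝ)^(k+1)) hn.le]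
    have hx1 : 0 ≤ x 1 := by
      by_contra hn
      push_neg at hn
      nlinarith [mul_nonpos_of_nonneg_of_nonpos (by positivity : (0:ℝ) ≤ 2*(3:ℝ)^(k+1)) hn.le]
    have hsum : x 0 + x 1 ≤ 2 := by
      by_contra hn
      push_neg at hn
      nlinarith
    exact mem_Ttri hx0 hx1 hsum hx2
  · rintro ⟨hT, hl⟩
    exact ⟨ThR_sub_Qk k (Ttri_sub_ThR _ hT), hl⟩

lemma Qk_bounded (k : ℕ) : Bornology.IsBounded (Qk k) := by
  have hP : (0:ℝ) < (3:ℝ)^(k+1) := by positivity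
  have hP1 : (1:ℝ) ≤ (3:ℝ)^(k+1) := by
    calc (1:ℝ) = 1^(k+1) := by rw [one_pow]
    _ ≤ 3^(k+1) := pow_le_pow_left₀ (by norm_num) (by norm_num) _
  apply (Metric.isBounded_closedBall (x := (0:V3)) (r := 2*(3:ℝ)^(k+1))).subset
  intro x hx
  rw [memQk] at hx
  obtain ⟨c1, c2, c3, c4⟩ := hx
  have hx0 : 0 ≤ x 0 := by
    by_contra hn; push_neg at hn
    nlinarith [mul_nonpos_of_nonneg_of_nonpos (by positivity : (0:ℝ) ≤ 2*(3:ℝ)^(k+1)) hn.le]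
  have hx1 : 0 ≤ x 1 := by
    by_contra hn; push_neg at hn
    nlinarith [mul_nonpos_of_nonneg_of_nonpos (by positivity : (0:ℝ) ≤ 2*(3:ℝ)^(k+1)) hn.le]
  have hx0' : x 0 ≤ 2 := by
    by_contra hn; push_neg at hn
    nlinarith [mul_nonneg hP.le hx1]
  have hx1' : x 1 ≤ 2 := by
    by_contra hn; push_neg at hn
    nlinarith [mul_nonneg hP.le hx0]
  have hx2' : x 2 ≤ 2*(3:ℝ)^(k+1) := by
    nlinarith [mul_nonneg hP.le hx0, mul_nonneg hP.le hx1]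
  have habs0 : dist (x 0) (0:ℝ) ≤ 2*(3:ℝ)^(k+1) := by
    rw [Real.dist_eq, sub_zero, abs_le]; constructor <;> nlinarith
  have habs1 : dist (x 1) (0:ℝ) ≤ 2*(3:ℝ)^(k+1) := by
    rw [Real.dist_eq, sub_zero, abs_le]; constructor <;> nlinarith
  have habs2 : dist (x 2) (0:ℝ) ≤ 2*(3:ℝ)^(k+1) := by
    rw [Real.dist_eq, sub_zero, abs_le]; constructor <;> nlinarith
  rw [Metric.mem_closedBall]
  rw [dist_pi_le_iff (by positivity)]
  intro b
  fin_cases b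
  · exact habs0
  · exact habs1
  · exact habs2

lemma Ttri_z {y : V3} (hy : y ∈ Ttri) : y 2 = 0 := by
  have hsub : Ttri ⊆ {p : V3 | p 2 = 0} := by
    apply convexHull_min
    · rintro p (rfl | rfl | rfl) <;> simp
    · intro u hu v hv a b _ _ _
      simp only [Set.mem_setOf_eq, Pi.add_apply, Pi.smul_apply, smul_eq_mul] at *
      rw [hu, hv]; ring
  exact hsub hy

theorem stmt_17 (k : ℕ) :
    ∃ Q : Set (Fin 3 → ℝ), IsRatPolyhedron Q ∧ Bornology.IsBounded Q ∧
      Q ∩ latticePts 3 = Ttri ∩ latticePts 3 ∧ splitClosure^[k] Q ≠ Ttri := by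
  refine ⟨Qk k, ⟨4, Amat k, bvec k, rfl⟩, Qk_bounded k, Qk_lattice k, ?_⟩
  have iter : ∀ j, j ≤ k → ThR ((3:ℝ)^(k+1-j)) ⊆ splitClosure^[j] (Qk k) := by
    intro j
    induction j with
    | zero =>
      intro _
      simpa using ThR_sub_Qk k
    | succ n ih =>
      intro hle
      have hn : n ≤ k := by omega
      have hh : (3:ℝ)/2 ≤ (3:ℝ)^(k+1-n) := by
        have h1 : (3:ℝ)^1 ≤ (3:ℝ)^(k+1-n) := by
          apply pow_le_pow_right₀ (by norm_num)
          omega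
        rw [pow_one] at h1
        linarith
      have hstep := key hh (ih hn)
      have hexp : ((3:ℝ)^(k+1-n))/3 = (3:ℝ)^(k+1-(n+1)) := by
        have h1 : k+1-n = (k+1-(n+1)) + 1 := by omega
        rw [h1, pow_succ]
        field_simp
      rw [hexp] at hstep
      rw [Function.iterate_succ_apply']
      exact hstep
  have hfin := iter k le_rfl
  have hk1 : k+1-k = 1 := by omega
  rw [hk1, pow_one] at hfin
  have happ : apx 3 ∈ splitClosure^[k] (Qk k) := hfin (gen3 3)
  intro heq
  rw [heq] at happ
  have := Ttri_z happ
  simp [apx] at this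
end
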